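/- For the function f : ℝ² → ℝ given by f(x₁,x₂) = |x₂ − x₁^{4/3}|^{3/2} (i.e. |x₂ − ∛(x₁⁴)|^{3/2}), the point (0,0) is a global minimizer with ∇f(0,0) = (0,0), for every unit vector v ∈ ℝ² there exist δ > 0 and C > 0 with f(tv) > Ct² for all t ∈ (0,δ), yet (0,0) is not a strict local minimizer (f vanishes along the curve x₂ = x₁^{4/3}), and f is not ℓ-stable at (0,0). -/

import Mathlib

open Filter Topology

/-- The space of continuous `m`-linear forms `L^m(E)`. -/
abbrev MForm (E : Type*) [NormedAddCommGroup E] [InnerProductSpace ℝ E] (m : ℕ) : Type _ :=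
  ContinuousMultilinearMap ℝ (fun _ : Fin m => E) ℝ

/-- A tuple of multilinear forms `(x₁*, …, x_k*)`, where `x_i*` is an `i`-linear form. -/
abbrev FormTuple (E : Type*) [NormedAddCommGroup E] [InnerProductSpace ℝ E] (k : ℕ) : Type _ :=
  ∀ i : Fin k, MForm E (i.1 + 1)

/-- Restriction of a tuple of forms to its first `m` entries. -/
def FormTuple.restrict {E : Type*} [NormedAddCommGroup E] [InnerProductSpace ℝ E] {k : ℕ}
    (xs : FormTuple E k) (m : ℕ) (h : m ≤ k) : FormTuple E m :=
  fun j => xs ⟨j.1, lt_of_lt_of_le j.2 h⟩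

/-- The lower Hadamard directional derivative of order `k + 1` of `f` at `x`
with parameters `xs = (x₁*, …, x_k*)` in direction `u`:
`liminf_{t↓0, u'→u} (k+1)!/t^(k+1) * (f (x + t u') - f x - ∑_{i=1}^{k} t^i/i! · x_i*(u',…,u'))`. -/
noncomputable def hadamardDeriv {E : Type*} [NormedAddCommGroup E] [InnerProductSpace ℝ E]
    (f : E → EReal) (x : E) (k : ℕ) (xs : FormTuple E k) (u : E) : EReal :=
  Filter.liminf
    (fun p : ℝ × E =>
      (((Nat.factorial (k + 1) : ℝ) / p.1 ^ (k + 1) : ℝ) : EReal) *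
        (f (x + p.1 • p.2) - f x -
          ((∑ i : Fin k, p.1 ^ (i.1 + 1) / (Nat.factorial (i.1 + 1)) * xs i (fun _ => p.2) : ℝ) :
            EReal)))
    ((𝓝[>] (0 : ℝ)) ×ˢ 𝓝 u)

/-- The lower Hadamard subdifferential of order `k + 1` of `f` at `x`
with parameters `xs = (x₁*, …, x_k*)`. -/
def hadamardSubdiff {E : Type*} [NormedAddCommGroup E] [InnerProductSpace ℝ E]
    (f : E → EReal) (x : E) (k : ℕ) (xs : FormTuple E k) : Set (MForm E (k + 1)) :=
  {y | ∀ u : E, ((y (fun _ => u) : ℝ) : EReal) ≤ hadamardDeriv f x k xs u}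

/-- The lower Dini directional derivative `D₋ f (x; u) = liminf_{t↓0} (f (x+tu) - f x)/t`. -/
noncomputable def diniLower {E : Type*} [NormedAddCommGroup E] [InnerProductSpace ℝ E]
    (f : E → EReal) (x u : E) : EReal :=
  Filter.liminf (fun t : ℝ => ((t⁻¹ : ℝ) : EReal) * (f (x + t • u) - f x)) (𝓝[>] (0 : ℝ))

/-- `f` is `ℓ`-stable at `xbar`: on some neighborhood `U` of `xbar` the lower Dini
derivatives satisfy `|D₋f (y; u) - D₋f (xbar; u)| ≤ K ‖y - xbar‖ ‖u‖` for `y ∈ U ∩ dom f`. -/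
def IsEllStable {E : Type*} [NormedAddCommGroup E] [InnerProductSpace ℝ E]
    (f : E → EReal) (xbar : E) : Prop :=
  ∃ U ∈ 𝓝 xbar, ∃ K > (0 : ℝ), ∀ y ∈ U, f y ≠ ⊤ → ∀ u : E,
    diniLower f y u - diniLower f xbar u ≤ ((K * ‖y - xbar‖ * ‖u‖ : ℝ) : EReal) ∧
    diniLower f xbar u - diniLower f y u ≤ ((K * ‖y - xbar‖ * ‖u‖ : ℝ) : EReal)

/-- The function `f (x₁, x₂) = |x₂ - ∛(x₁⁴)| ^ (3/2)`. -/
noncomputable def fEx16 : EuclideanSpace ℝ (Fin 2) → ℝ := fun x =>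
  |x 1 - ((x 0) ^ 4) ^ ((1 : ℝ) / 3)| ^ ((3 : ℝ) / 2)

/-!
Write `fEx16 = φ ∘ g` with `g x = x₂ - |x₁|^(4/3)` and `φ s = |s|^(3/2)`. For `p > 1` the map
`s ↦ |s|^p` has derivative `0` at `0`, so `g` is differentiable at `0` and the chain rule gives
`∇fEx16 0 = φ'(0) • ∇g 0 = 0`. Along a unit ray, `|g (t v)| ≥ t^(4/3)` for small `t > 0` (an
equality when `v₂ = 0`; otherwise the linear term `t v₂` dominates), hence
`fEx16 (t v) ≥ t²`. On the vertical axis `fEx16 (0, a + t) = |a + t|^(3/2)`, so the lower Dini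
derivative in direction `e₂` is `(3/2) √a` at `(0, a)` but `0` at the origin, and
`(3/2) √a ≤ K a` fails for small `a > 0`.
-/

section AbsRpow

variable {p : ℝ}

theorem hasDerivAt_abs_rpow_zero (hp : 1 < p) : HasDerivAt (fun s : ℝ => |s| ^ p) 0 0 := by
  refine HasDerivAt.of_isLittleO (Asymptotics.isLittleO_iff.mpr fun c hc => ?_)
  have hsmall : ∀ᶠ s : ℝ in 𝓝 0, |s| ^ (p - 1) ≤ c := by
    have h : Tendsto (fun s : ℝ => |s| ^ (p - 1)) (𝓝 0) (𝓝 0) := by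
      have := ((Real.continuousAt_rpow_const _ _ (Or.inr (sub_pos.mpr hp).le)).comp
          (continuous_abs.continuousAt (x := (0 : ℝ)))).tendsto
      simpa [Function.comp_def, Real.zero_rpow (sub_pos.mpr hp).ne'] using this
    exact h.eventually (ge_mem_nhds hc)
  filter_upwards [hsmall] with s hs
  have hsplit : |s| ^ p = |s| ^ (p - 1) * |s| := by
    rw [← Real.rpow_add_one' (abs_nonneg s) (by linarith), sub_add_cancel]
  simpa [hsplit, Real.zero_rpow (by linarith : p ≠ 0), abs_mul,
    abs_of_nonneg (Real.rpow_nonneg (abs_nonneg s) _)] using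
    mul_le_mul_of_nonneg_right hs (abs_nonneg s)

theorem hasDerivAt_abs_rpow_of_pos {a : ℝ} (ha : 0 < a) :
    HasDerivAt (fun s : ℝ => |s| ^ p) (p * a ^ (p - 1)) a :=
  (Real.hasDerivAt_rpow_const (Or.inl ha.ne')).congr_of_eventuallyEq <| by
    filter_upwards [lt_mem_nhds ha] with s hs
    rw [abs_of_pos hs]

end AbsRpow

theorem diniLower_coe_of_hasDerivWithinAt {E : Type*} [NormedAddCommGroup E]
    [InnerProductSpace ℝ E] {f : E → ℝ} {x u : E} {r : ℝ}
    (h : HasDerivWithinAt (fun t : ℝ => f (x + t • u)) r (Set.Ioi 0) 0) :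
    diniLower (fun z => (f z : EReal)) x u = r := by
  have hslope := (hasDerivWithinAt_iff_tendsto_slope' (by simp)).mp h
  rw [← ((continuous_coe_real_ereal.tendsto r).comp hslope).liminf_eq, diniLower]
  congr with t
  simp [slope_def_field, div_eq_inv_mul, EReal.coe_mul, EReal.coe_sub]

theorem pow_four_rpow_one_div_three (s : ℝ) : (s ^ 4) ^ ((1 : ℝ) / 3) = |s| ^ ((4 : ℝ) / 3) := by
  rw [← Even.pow_abs (by decide : Even 4), ← Real.rpow_natCast, ← Real.rpow_mul (abs_nonneg s)]
  norm_num

noncomputable def fEx16Inner (x : EuclideanSpace ℝ (Fin 2)) : ℝ := x 1 - |x 0| ^ ((4 : ℝ) / 3)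

theorem fEx16_eq_comp : fEx16 = (fun s : ℝ => |s| ^ ((3 : ℝ) / 2)) ∘ fEx16Inner := by
  ext x
  simp only [fEx16, fEx16Inner, Function.comp_apply, pow_four_rpow_one_div_three]

theorem fEx16_nonneg (x : EuclideanSpace ℝ (Fin 2)) : 0 ≤ fEx16 x :=
  Real.rpow_nonneg (abs_nonneg _) _

theorem fEx16_eq_zero_of_eq {x : EuclideanSpace ℝ (Fin 2)} (h : x 1 = (x 0 ^ 4) ^ ((1 : ℝ) / 3)) :
    fEx16 x = 0 := by
  simp [fEx16, h, Real.zero_rpow]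

theorem fEx16_zero : fEx16 0 = 0 :=
  fEx16_eq_zero_of_eq (by simp)

theorem hasFDerivAt_fEx16_zero : HasFDerivAt fEx16 (0 : EuclideanSpace ℝ (Fin 2) →L[ℝ] ℝ) 0 := by
  have hinner : DifferentiableAt ℝ fEx16Inner 0 := by
    have hcorner := (hasDerivAt_abs_rpow_zero (p := 4 / 3) (by norm_num)).differentiableAt
    exact (EuclideanSpace.proj (𝕜 := ℝ) (1 : Fin 2)).differentiableAt.fun_sub
      (hcorner.fun_comp' (0 : EuclideanSpace ℝ (Fin 2))
        (EuclideanSpace.proj (𝕜 := ℝ) (0 : Fin 2)).differentiableAt)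
  have houter : HasDerivAt (fun s : ℝ => |s| ^ ((3 : ℝ) / 2)) 0 (fEx16Inner 0) := by
    simpa [fEx16Inner, Real.zero_rpow] using hasDerivAt_abs_rpow_zero (p := 3 / 2) (by norm_num)
  simpa [fEx16_eq_comp] using houter.comp_hasFDerivAt 0 hinner.hasFDerivAt

theorem fEx16Inner_smul {t : ℝ} (ht : 0 ≤ t) (v : EuclideanSpace ℝ (Fin 2)) :
    fEx16Inner (t • v) = t * v 1 - t ^ ((4 : ℝ) / 3) * |v 0| ^ ((4 : ℝ) / 3) := by
  simp [fEx16Inner, abs_mul, abs_of_nonneg ht, Real.mul_rpow ht (abs_nonneg _)]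

theorem eventually_rpow_le_abs_fEx16Inner_smul {v : EuclideanSpace ℝ (Fin 2)} (hv : ‖v‖ = 1) :
    ∀ᶠ t in 𝓝[>] 0, t ^ ((4 : ℝ) / 3) ≤ |fEx16Inner (t • v)| := by
  by_cases hv1 : v 1 = 0
  · have hv0 : |v 0| = 1 := by
      simpa [EuclideanSpace.norm_eq, Fin.sum_univ_two, hv1, Real.sqrt_sq_eq_abs] using hv
    filter_upwards [self_mem_nhdsWithin] with t (ht : 0 < t)
    simp [fEx16Inner_smul ht.le, hv0, hv1, abs_of_pos (Real.rpow_pos_of_pos ht _)]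
  · have hv0 : |v 0| ≤ 1 := (PiLp.norm_apply_le v 0).trans hv.le
    have hcbrt : ∀ᶠ t in 𝓝[>] (0 : ℝ), t ^ ((1 : ℝ) / 3) ≤ |v 1| / 2 := by
      have h : Tendsto (fun t : ℝ => t ^ ((1 : ℝ) / 3)) (𝓝[>] 0) (𝓝 0) := by
        simpa [Real.zero_rpow] using
          (Real.continuousAt_rpow_const 0 ((1 : ℝ) / 3) (by norm_num)).tendsto.mono_left
            nhdsWithin_le_nhds
      exact h.eventually (ge_mem_nhds (by positivity))
    filter_upwards [self_mem_nhdsWithin, hcbrt] with t (ht : 0 < t) htv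
    have hsplit : t ^ ((4 : ℝ) / 3) = t * t ^ ((1 : ℝ) / 3) := by
      rw [← Real.rpow_one_add' ht.le (by norm_num)]
      norm_num
    have hcorner : t ^ ((4 : ℝ) / 3) * |v 0| ^ ((4 : ℝ) / 3) ≤ t ^ ((4 : ℝ) / 3) :=
      mul_le_of_le_one_right (by positivity) (Real.rpow_le_one (abs_nonneg _) hv0 (by norm_num))
    have hlinear : 2 * t ^ ((4 : ℝ) / 3) ≤ t * |v 1| := by
      rw [hsplit]
      nlinarith
    rw [fEx16Inner_smul ht.le]
    calc t ^ ((4 : ℝ) / 3) ≤ |t * v 1| - |t ^ ((4 : ℝ) / 3) * |v 0| ^ ((4 : ℝ) / 3)| := by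
          rw [abs_mul t, abs_of_pos ht, abs_of_nonneg (by positivity : (0 : ℝ) ≤ _ * _)]
          linarith
      _ ≤ _ := abs_sub_abs_le_abs_sub _ _

theorem eventually_sq_le_fEx16_smul {v : EuclideanSpace ℝ (Fin 2)} (hv : ‖v‖ = 1) :
    ∀ᶠ t in 𝓝[>] 0, t ^ 2 ≤ fEx16 (t • v) := by
  filter_upwards [self_mem_nhdsWithin, eventually_rpow_le_abs_fEx16Inner_smul hv]
    with t (ht : 0 < t) hinner
  calc t ^ 2 = (t ^ ((4 : ℝ) / 3)) ^ ((3 : ℝ) / 2) := by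
        rw [← Real.rpow_mul ht.le, ← Real.rpow_natCast]
        norm_num
    _ ≤ fEx16 (t • v) := by
        rw [fEx16_eq_comp]
        exact Real.rpow_le_rpow (by positivity) hinner (by norm_num)

theorem frequently_fEx16_eq_zero :
    ∃ᶠ x in 𝓝[≠] (0 : EuclideanSpace ℝ (Fin 2)), fEx16 x = 0 := by
  let γ : ℝ → EuclideanSpace ℝ (Fin 2) := fun s => !₂[s, (s ^ 4) ^ ((1 : ℝ) / 3)]
  have hγ : Tendsto γ (𝓝[≠] 0) (𝓝[≠] 0) := by
    refine tendsto_nhdsWithin_of_tendsto_nhds_of_eventually_within _ ?_ ?_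
    · have hcont : Continuous γ := by fun_prop (disch := norm_num)
      have hγ0 : γ 0 = 0 := by
        ext i
        fin_cases i <;> simp [γ, Real.zero_rpow]
      exact hγ0 ▸ (hcont.tendsto 0).mono_left nhdsWithin_le_nhds
    · filter_upwards [self_mem_nhdsWithin] with s hs hγs
      exact hs (by simpa [γ] using congrArg (· 0) hγs)
  exact hγ.frequently (Frequently.of_forall fun s => fEx16_eq_zero_of_eq (by simp [γ]))

theorem fEx16_single_one_add_smul (a t : ℝ) :
    fEx16 (EuclideanSpace.single 1 a + t • EuclideanSpace.single 1 1) =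
      |a + t| ^ ((3 : ℝ) / 2) := by
  simp [fEx16, Real.zero_rpow]

theorem diniLower_fEx16_single_one {a r : ℝ}
    (h : HasDerivAt (fun s : ℝ => |s| ^ ((3 : ℝ) / 2)) r a) :
    diniLower (fun y => (fEx16 y : EReal)) (EuclideanSpace.single 1 a)
      (EuclideanSpace.single 1 1) = r := by
  apply diniLower_coe_of_hasDerivWithinAt
  simp only [fEx16_single_one_add_smul]
  exact (HasDerivAt.comp_const_add a 0 (by rwa [add_zero])).hasDerivWithinAt

theorem not_isEllStable_fEx16 : ¬ IsEllStable (fun y => (fEx16 y : EReal)) 0 := by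
  rintro ⟨U, hU, K, -, hK⟩
  obtain ⟨ε, hε, hball⟩ := Metric.mem_nhds_iff.mp hU
  have hsqrt : Tendsto (fun a : ℝ => K * a ^ ((1 : ℝ) / 2)) (𝓝[>] 0) (𝓝 0) := by
    simpa [Real.zero_rpow] using
      ((Real.continuousAt_rpow_const 0 ((1 : ℝ) / 2) (by norm_num)).tendsto.const_mul K).mono_left
        nhdsWithin_le_nhds
  obtain ⟨a, ⟨ha, haε⟩, haK⟩ := (Filter.Eventually.and (Ioo_mem_nhdsGT hε)
    (hsqrt.eventually (gt_mem_nhds (by norm_num : (0 : ℝ) < 3 / 2)))).exists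
  have haU : EuclideanSpace.single 1 a ∈ U :=
    hball (by simpa [PiLp.norm_single, abs_of_pos ha] using haε)
  have hD0 : diniLower (fun y => (fEx16 y : EReal)) 0 (EuclideanSpace.single 1 1) = (0 : ℝ) := by
    rw [← (PiLp.single_eq_zero_iff 2 (1 : Fin 2)).mpr rfl]
    exact diniLower_fEx16_single_one (hasDerivAt_abs_rpow_zero (by norm_num))
  have h := (hK _ haU (EReal.coe_ne_top _) (EuclideanSpace.single 1 1)).1
  rw [diniLower_fEx16_single_one (hasDerivAt_abs_rpow_of_pos ha), hD0, ← EReal.coe_sub,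
    EReal.coe_le_coe_iff] at h
  have hsq : a ^ ((1 : ℝ) / 2) * a ^ ((1 : ℝ) / 2) = a := by
    rw [← Real.rpow_add ha]
    norm_num
  norm_num [PiLp.norm_single, abs_of_pos ha] at h
  nlinarith [Real.rpow_pos_of_pos ha ((1 : ℝ) / 2)]

/-- `(0,0)` is a global minimizer of `fEx16` with `∇fEx16 (0,0) = 0`; for
every unit vector `v` one has `fEx16 (t v) > C t²` on some interval `(0, δ)`; yet `(0,0)`
is not a strict local minimizer (`fEx16` vanishes along `x₂ = x₁^(4/3)`), and `fEx16` is
not `ℓ`-stable at `(0,0)`. -/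
theorem stmt_16 :
    (∀ x : EuclideanSpace ℝ (Fin 2), fEx16 0 ≤ fEx16 x) ∧
      fderiv ℝ fEx16 0 = 0 ∧
      (∀ v : EuclideanSpace ℝ (Fin 2), ‖v‖ = 1 →
        ∃ δ > (0 : ℝ), ∃ C > (0 : ℝ), ∀ t : ℝ, 0 < t → t < δ → C * t ^ 2 < fEx16 (t • v)) ∧
      (∀ x : EuclideanSpace ℝ (Fin 2), x 1 = ((x 0) ^ 4) ^ ((1 : ℝ) / 3) → fEx16 x = 0) ∧
      ¬ (∀ᶠ x in 𝓝[≠] (0 : EuclideanSpace ℝ (Fin 2)), fEx16 0 < fEx16 x) ∧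
      ¬ IsEllStable (fun y => ((fEx16 y : ℝ) : EReal)) 0 := by
  refine ⟨fun x => fEx16_zero ▸ fEx16_nonneg x, hasFDerivAt_fEx16_zero.fderiv, fun v hv => ?_,
    fun x => fEx16_eq_zero_of_eq, ?_, not_isEllStable_fEx16⟩
  · obtain ⟨δ, hδ, hsq⟩ := mem_nhdsGT_iff_exists_Ioo_subset.mp (eventually_sq_le_fEx16_smul hv)
    refine ⟨δ, hδ, 1 / 2, by norm_num, fun t ht htδ => ?_⟩
    calc 1 / 2 * t ^ 2 < t ^ 2 := by nlinarith
      _ ≤ fEx16 (t • v) := hsq ⟨ht, htδ⟩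
  · exact Filter.not_eventually.mpr
      (frequently_fEx16_eq_zero.mono fun x hx => by simp [fEx16_zero, hx])
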